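/- The matrices A = [[1,2],[0,1]] and B = [[1,0],[2,1]] generate a free subgroup of rank 2 in SL(2, Z). -/

import Mathlib

/-!
Ping-pong on the plane `R²` over an ordered ring: every nonzero power of `[[1,c],[0,1]]` with `|c| ≥ 2` maps the cone
`|x| < |y|` into the cone `|y| < |x|`, and every nonzero power of `[[1,0],[d,1]]` with `|d| ≥ 2`
maps it back, so no nontrivial reduced word in the two matrices acts trivially.
-/

open Function Pointwise

theorem FreeGroup.injective_lift_of_ping_pong_zpow {ι G α : Type*} [Nontrivial ι] [Group G]
    [MulAction G α] (a : ι → G) (X : ι → Set α) (hXnonempty : ∀ i, (X i).Nonempty)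
    (hXdisj : Pairwise (Disjoint on X))
    (hpp : Pairwise fun i j => ∀ n : ℤ, n ≠ 0 → a i ^ n • X j ⊆ X i) :
    Injective (FreeGroup.lift a) := by
  have hlift : FreeGroup.lift a =
      (Monoid.CoprodI.lift fun i => FreeGroup.lift fun _ : Unit => a i).comp
        freeGroupEquivCoprodI.toMonoidHom := by
    ext i
    simp
  rw [hlift, MonoidHom.coe_comp]
  refine Injective.comp ?_ freeGroupEquivCoprodI.injective
  -- the free product ping-pong lemma needs a factor with at least three elements
  have hcard : ∃ _ : ι, 3 ≤ Cardinal.mk (FreeGroup Unit) :=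
    ⟨Classical.arbitrary ι,
      Cardinal.natCast_lt_aleph0.le.trans (Cardinal.infinite_iff.mp inferInstance)⟩
  refine Monoid.CoprodI.lift_injective_of_ping_pong _ (.inr hcard) X hXnonempty hXdisj ?_
  intro i j hij
  refine FreeGroup.freeGroupUnitEquivInt.forall_congr_left.mpr fun n hn => ?_
  change FreeGroup.lift (fun _ => a i) (FreeGroup.of () ^ n) • X j ⊆ X i
  rw [map_zpow, FreeGroup.lift_apply_of]
  refine hpp hij n ?_
  rintro rfl
  exact hn rfl

theorem MonoidHom.map_zpow_of_eq_one_add {G R : Type*} [Group G] [Ring R] (f : G →* R) {g : G}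
    {N : R} (hg : f g = 1 + N) (hN : N * N = 0) (k : ℤ) : f (g ^ k) = 1 + k • N := by
  have hinv : f g⁻¹ = 1 - N := by
    have hright : f g * (1 - N) = 1 := by
      rw [hg, mul_sub, mul_one, add_mul, one_mul, hN, add_zero, add_sub_cancel_right]
    calc f g⁻¹ = f g⁻¹ * (f g * (1 - N)) := by rw [hright, mul_one]
      _ = 1 - N := by rw [← mul_assoc, ← map_mul, inv_mul_cancel, map_one, one_mul]
  induction k using Int.induction_on with
  | zero => simp
  | succ k ih =>
    rw [zpow_add_one, map_mul, ih, hg]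
    simp only [mul_add, add_mul, mul_one, one_mul, smul_mul_assoc, hN, smul_zero, add_smul,
      one_smul]
    abel
  | pred k ih =>
    rw [zpow_sub_one, map_mul, ih, hinv]
    simp only [mul_sub, add_mul, mul_one, one_mul, smul_mul_assoc, hN, smul_zero, sub_smul,
      one_smul]
    abel

section OrderedRing

variable {R : Type*} [CommRing R] [LinearOrder R] [IsStrictOrderedRing R]

theorem abs_lt_abs_add_mul_of_two_le_abs {x y c : R} (h : |x| < |y|) (hc : 2 ≤ |c|) :
    |y| < |x + c * y| :=
  calc |y| < 2 * |y| - |x| := by linarith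
    _ ≤ |c * y| - |x| := by rw [abs_mul]; gcongr
    _ ≤ |x + c * y| := by
      simpa [add_comm] using abs_sub_abs_le_abs_sub (c * y) (-x)

theorem two_le_abs_intCast_mul {k : ℤ} (hk : k ≠ 0) {c : R} (hc : 2 ≤ |c|) : 2 ≤ |k * c| := by
  have hk' : (1 : R) ≤ |(k : R)| := by exact_mod_cast Int.one_le_abs hk
  rw [abs_mul]
  nlinarith [abs_nonneg c]

end OrderedRing

namespace Matrix.SpecialLinearGroup

section CommRing

variable {R : Type*} [CommRing R]

theorem coe_zpow_of_coe_eq_upper_unipotent {g : SpecialLinearGroup (Fin 2) R} {c : R}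
    (hg : g.val = !![1, c; 0, 1]) (k : ℤ) : (g ^ k).val = !![1, k * c; 0, 1] := by
  have h := coeMonoidHom.map_zpow_of_eq_one_add (N := !![0, c; 0, 0])
    (by rw [coeMonoidHom_apply, hg]; ext i j; fin_cases i <;> fin_cases j <;> simp)
    (by ext i j; fin_cases i <;> fin_cases j <;> simp) k
  rw [coeMonoidHom_apply] at h
  rw [h]
  ext i j
  fin_cases i <;> fin_cases j <;> simp

theorem coe_zpow_of_coe_eq_lower_unipotent {g : SpecialLinearGroup (Fin 2) R} {c : R}
    (hg : g.val = !![1, 0; c, 1]) (k : ℤ) : (g ^ k).val = !![1, 0; k * c, 1] := by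
  have h := coeMonoidHom.map_zpow_of_eq_one_add (N := !![0, 0; c, 0])
    (by rw [coeMonoidHom_apply, hg]; ext i j; fin_cases i <;> fin_cases j <;> simp)
    (by ext i j; fin_cases i <;> fin_cases j <;> simp) k
  rw [coeMonoidHom_apply] at h
  rw [h]
  ext i j
  fin_cases i <;> fin_cases j <;> simp

end CommRing

section OrderedRing

variable {R : Type*} [CommRing R] [LinearOrder R] [IsStrictOrderedRing R]

theorem zpow_smul_subset_of_coe_eq_upper_unipotent {g : SpecialLinearGroup (Fin 2) R} {c : R}
    (hg : g.val = !![1, c; 0, 1]) (hc : 2 ≤ |c|) {k : ℤ} (hk : k ≠ 0) :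
    g ^ k • {v : Fin 2 → R | |v 0| < |v 1|} ⊆ {v | |v 1| < |v 0|} := by
  rintro _ ⟨v, hv, rfl⟩
  simpa [SpecialLinearGroup.smul_def, coe_zpow_of_coe_eq_upper_unipotent hg, dotProduct,
    Fin.sum_univ_two] using abs_lt_abs_add_mul_of_two_le_abs hv (two_le_abs_intCast_mul hk hc)

theorem zpow_smul_subset_of_coe_eq_lower_unipotent {g : SpecialLinearGroup (Fin 2) R} {c : R}
    (hg : g.val = !![1, 0; c, 1]) (hc : 2 ≤ |c|) {k : ℤ} (hk : k ≠ 0) :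
    g ^ k • {v : Fin 2 → R | |v 1| < |v 0|} ⊆ {v | |v 0| < |v 1|} := by
  rintro _ ⟨v, hv, rfl⟩
  simpa [SpecialLinearGroup.smul_def, coe_zpow_of_coe_eq_lower_unipotent hg, dotProduct,
    Fin.sum_univ_two, add_comm] using
    abs_lt_abs_add_mul_of_two_le_abs hv (two_le_abs_intCast_mul hk hc)

theorem injective_freeGroupLift_of_unipotent {g h : SpecialLinearGroup (Fin 2) R} {c d : R}
    (hg : g.val = !![1, c; 0, 1]) (hh : h.val = !![1, 0; d, 1]) (hc : 2 ≤ |c|) (hd : 2 ≤ |d|) :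
    Injective (FreeGroup.lift fun x : Bool => if x then g else h) := by
  refine FreeGroup.injective_lift_of_ping_pong_zpow _
    (fun x => if x then {v : Fin 2 → R | |v 1| < |v 0|} else {v | |v 0| < |v 1|}) ?_ ?_ ?_
  · rintro (_ | _)
    exacts [⟨![0, 1], by simp⟩, ⟨![1, 0], by simp⟩]
  · have hdisj : Disjoint {v : Fin 2 → R | |v 1| < |v 0|} {v | |v 0| < |v 1|} :=
      Set.disjoint_left.mpr fun _ h₁ h₂ => lt_asymm (α := R) h₁ h₂
    rintro (_ | _) (_ | _) hne
    exacts [(hne rfl).elim, hdisj.symm, hdisj, (hne rfl).elim]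
  · rintro (_ | _) (_ | _) hne k hk
    exacts [(hne rfl).elim, zpow_smul_subset_of_coe_eq_lower_unipotent hh hd hk,
      zpow_smul_subset_of_coe_eq_upper_unipotent hg hc hk, (hne rfl).elim]

end OrderedRing

end Matrix.SpecialLinearGroup

theorem stmt6
    (A B : Matrix.SpecialLinearGroup (Fin 2) ℤ)
    (hA : A.val = !![1, 2; 0, 1]) (hB : B.val = !![1, 0; 2, 1]) :
    Function.Injective (FreeGroup.lift (fun x : Bool => if x then A else B)) :=
  Matrix.SpecialLinearGroup.injective_freeGroupLift_of_unipotent hA hB (by norm_num) (by norm_num)
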